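/- arXiv:1807.01680 — 9 statements merged into one kernel-verified Lean document; each statement's English description precedes it below -/
import Mathlib

section
/- A graph has a sink-free orientation if and only if no connected component of it is a tree. Equivalently: a finite simple undirected graph G admits an orientation of its edges in which every vertex has out-degree at least 1 if and only if every connected component of G contains a cycle. -/
/-!
A sink-free orientation amounts to choosing an out-neighbour `s v` of every vertex such that no
edge is chosen from both of its ends. On a finite tree no such choice exists, since
`v ↦ s(v, s v)` would inject the `n` vertices into the `n - 1` edges; applied to the component
of `v`, this yields a cycle reachable from `v`. Conversely, if every component carries a cycle,
let each cycle vertex choose its neighbour along the cycle and every other vertex a neighbour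
strictly closer to the chosen cycles.
-/

namespace SimpleGraph

variable {V : Type*} {G : SimpleGraph V}

/-- Orienting each edge `v → s v`, and the remaining edges arbitrarily, gives a sink-free
orientation. -/
def IsOrientedNeighborChoice (G : SimpleGraph V) (s : V → V) : Prop :=
  (∀ v, G.Adj v (s v)) ∧ ∀ v, s (s v) ≠ v

theorem exists_sinkFree_orientation_iff_exists_isOrientedNeighborChoice :
    (∃ σ : V → V → Prop,
        (∀ u v, σ u v → G.Adj u v) ∧
        (∀ u v, G.Adj u v → (σ u v ↔ ¬ σ v u)) ∧
        (∀ v, ∃ u, σ v u)) ↔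
      ∃ s, G.IsOrientedNeighborChoice s := by
  constructor
  · rintro ⟨σ, hσ_adj, hσ_asymm, hσ_out⟩
    choose s hs using hσ_out
    refine ⟨s, fun v ↦ hσ_adj _ _ (hs v), fun v hv ↦ ?_⟩
    have hback := hs (s v)
    rw [hv] at hback
    exact (hσ_asymm _ _ (hσ_adj _ _ (hs v))).mp (hs v) hback
  · rintro ⟨s, hs_adj, hs⟩
    classical
    let : LinearOrder V := linearOrderOfSTO WellOrderingRel
    refine ⟨fun u v ↦ G.Adj u v ∧ (s u = v ∨ s v ≠ u ∧ u < v), fun _ _ h ↦ h.1, ?_,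
      fun v ↦ ⟨s v, hs_adj v, .inl rfl⟩⟩
    intro u v huv
    have := huv.ne
    grind [hs u, hs v, huv.symm]

theorem IsTree.exists_apply_apply_eq_self [Finite V] (hG : G.IsTree) (s : V → V)
    (hs : ∀ v, G.Adj v (s v)) : ∃ v, s (s v) = v := by
  classical
  have := Fintype.ofFinite V
  by_contra! h
  let e : V → G.edgeSet := fun v ↦ ⟨s(v, s v), hs v⟩
  have he : Function.Injective e := by
    intro u v huv
    rcases Sym2.eq_iff.mp (congrArg Subtype.val huv) with ⟨rfl, -⟩ | ⟨rfl, hsu⟩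
    · rfl
    · exact absurd hsu (h _)
  have := Fintype.card_le_of_injective e he
  have := hG.card_edgeFinset
  rw [edgeFinset_card] at this
  omega

theorem IsOrientedNeighborChoice.exists_reachable_isCycle [Finite V] {s : V → V}
    (hs : G.IsOrientedNeighborChoice s) (v : V) :
    ∃ u, G.Reachable v u ∧ ∃ p : G.Walk u u, p.IsCycle := by
  set c := G.connectedComponentMk v
  have hmem : ∀ x ∈ c.supp, s x ∈ c.supp := fun x hx ↦
    ((ConnectedComponent.connectedComponentMk_eq_of_adj (hs.1 x)).symm.trans hx :)
  let s' : c.supp → c.supp := fun x ↦ ⟨s x, hmem x x.2⟩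
  have hnot_tree : ¬ c.toSimpleGraph.IsTree := fun hT ↦ by
    obtain ⟨x, hx⟩ := hT.exists_apply_apply_eq_self s' fun x ↦ hs.1 x
    exact hs.2 x (congrArg Subtype.val hx)
  obtain ⟨u, p, hp⟩ : ∃ (u : c.supp) (p : c.toSimpleGraph.Walk u u), p.IsCycle := by
    by_contra! h
    exact hnot_tree ⟨c.connected_toSimpleGraph, fun u p ↦ h u p⟩
  exact ⟨u, (ConnectedComponent.mem_supp_iff _ _).mp u.2 |>.symm |> ConnectedComponent.exact,
    p.map c.toSimpleGraph_hom, hp.map Subtype.val_injective⟩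

theorem exists_adj_lt_of_forall_exists_reachable (S : Set V)
    (hS : ∀ v, ∃ x ∈ S, G.Reachable v x) : ∃ d : V → ℕ, ∀ v ∉ S, ∃ w, G.Adj v w ∧ d w < d v := by
  let lengths (v : V) : Set ℕ := {n | ∃ x ∈ S, ∃ q : G.Walk v x, q.length = n}
  have hne (v : V) : (lengths v).Nonempty := by
    obtain ⟨x, hx, ⟨q⟩⟩ := hS v
    exact ⟨q.length, x, hx, q, rfl⟩
  refine ⟨fun v ↦ sInf (lengths v), fun v hv ↦ ?_⟩
  obtain ⟨x, hx, q, hq⟩ := Nat.sInf_mem (hne v)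
  cases q with
  | nil => exact absurd hx hv
  | @cons _ w _ hadj q' =>
    refine ⟨w, hadj, lt_of_le_of_lt (Nat.sInf_le ⟨x, hx, q', rfl⟩) ?_⟩
    show q'.length < sInf (lengths v)
    simp only [Walk.length_cons] at hq
    omega

theorem exists_isOrientedNeighborChoice_of_forall_exists_reachable (S : Set V) (t : V → V)
    (ht : ∀ x ∈ S, G.Adj x (t x) ∧ t x ∈ S ∧ t (t x) ≠ x)
    (hS : ∀ v, ∃ x ∈ S, G.Reachable v x) : ∃ s, G.IsOrientedNeighborChoice s := by
  classical
  obtain ⟨d, hd⟩ := exists_adj_lt_of_forall_exists_reachable S hS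
  choose! r hr_adj hr_lt using hd
  let s (v : V) : V := if v ∈ S then t v else r v
  have hs_mem (v : V) (hv : v ∈ S) : s v ∈ S := by simpa [s, hv] using (ht v hv).2.1
  have hs_lt (v : V) (hv : v ∉ S) : d (s v) < d v := by simpa [s, hv] using hr_lt v hv
  refine ⟨s, fun v ↦ ?_, fun v hv ↦ ?_⟩
  · by_cases h : v ∈ S
    · simpa [s, h] using (ht v h).1
    · simpa [s, h] using hr_adj v h
  · by_cases h : v ∈ S
    · simp only [s, h, if_pos, (ht v h).2.1] at hv
      exact (ht v h).2.2 hv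
    by_cases h' : s v ∈ S
    · exact h (hv ▸ hs_mem _ h')
    · have := hs_lt _ h'
      rw [hv] at this
      exact absurd (hs_lt v h) (by omega)

theorem Walk.IsCycle.exists_adj_mem_support {u : V} {p : G.Walk u u} (hp : p.IsCycle) :
    ∃ t : V → V, ∀ x ∈ p.support, G.Adj x (t x) ∧ t x ∈ p.support ∧ t (t x) ≠ x := by
  have hdart : ∀ x ∈ p.support, ∃ y, ∃ h : G.Adj y x, (⟨(y, x), h⟩ : G.Dart) ∈ p.darts := by
    intro x hx
    have hx_tail : x ∈ p.support.tail := by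
      rcases (p.mem_support_iff).mp hx with rfl | h
      · exact Walk.end_mem_tail_support hp.not_nil
      · exact h
    rw [← Walk.map_snd_darts] at hx_tail
    obtain ⟨⟨⟨y, x⟩, h⟩, hd, rfl⟩ := List.mem_map.mp hx_tail
    exact ⟨y, h, hd⟩
  choose! t ht_adj ht_mem using hdart
  refine ⟨t, fun x hx ↦ ⟨(ht_adj x hx).symm, p.dart_fst_mem_support_of_mem_darts (ht_mem x hx),
    fun hxx ↦ ?_⟩⟩
  have hy := ht_mem (t x) (p.dart_fst_mem_support_of_mem_darts (ht_mem x hx))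
  simp only [hxx] at hy
  have := List.inj_on_of_nodup_map hp.edges_nodup (ht_mem x hx) hy
    (Sym2.eq_swap : s(t x, x) = s(x, t x))
  simp only [Dart.mk.injEq, Prod.mk.injEq] at this
  exact (ht_adj x hx).ne this.1

theorem exists_isOrientedNeighborChoice_of_forall_exists_isCycle
    (h : ∀ v : V, ∃ u, G.Reachable v u ∧ ∃ p : G.Walk u u, p.IsCycle) :
    ∃ s, G.IsOrientedNeighborChoice s := by
  have hcycle (c : G.ConnectedComponent) : ∃ u ∈ c.supp, ∃ p : G.Walk u u, p.IsCycle := by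
    induction c using ConnectedComponent.ind with | h v => ?_
    obtain ⟨u, huv, p, hp⟩ := h v
    exact ⟨u, ConnectedComponent.sound huv.symm, p, hp⟩
  choose u hu p hp using hcycle
  choose t ht using fun c ↦ (hp c).exists_adj_mem_support
  let S : Set V := {x | x ∈ (p (G.connectedComponentMk x)).support}
  refine exists_isOrientedNeighborChoice_of_forall_exists_reachable S
    (fun x ↦ t (G.connectedComponentMk x) x) (fun x hx ↦ ?_) fun v ↦ ?_
  · obtain ⟨hadj, hmem, hne⟩ := ht _ x hx
    have hc := ConnectedComponent.connectedComponentMk_eq_of_adj hadj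
    refine ⟨hadj, ?_, ?_⟩
    · show _ ∈ (p _).support
      rwa [← hc]
    · rwa [← hc]
  · have hc : G.connectedComponentMk (u (G.connectedComponentMk v)) = G.connectedComponentMk v :=
      hu _
    refine ⟨u (G.connectedComponentMk v), ?_, ConnectedComponent.exact hc.symm⟩
    show _ ∈ (p _).support
    rw [hc]
    exact Walk.start_mem_support _

end SimpleGraph

/-- A finite simple graph admits a sink-free orientation (each edge gets exactly one
direction and every vertex has out-degree at least 1) if and only if every connected
component contains a cycle (i.e. no component is a tree). -/
theorem sink_free_orientation_iff_no_tree_component {V : Type*} [Fintype V]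
    (G : SimpleGraph V) :
    (∃ σ : V → V → Prop,
        (∀ u v, σ u v → G.Adj u v) ∧
        (∀ u v, G.Adj u v → (σ u v ↔ ¬ σ v u)) ∧
        (∀ v, ∃ u, σ v u)) ↔
      (∀ v : V, ∃ u, G.Reachable v u ∧ ∃ p : G.Walk u u, p.IsCycle) := by
  rw [SimpleGraph.exists_sinkFree_orientation_iff_exists_isOrientedNeighborChoice]
  exact ⟨fun ⟨_, hs⟩ ↦ hs.exists_reachable_isCycle,
    SimpleGraph.exists_isOrientedNeighborChoice_of_forall_exists_isCycle⟩
end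

section
/- Let (V, R) be a connected unicyclic graph (|R| = |V|, containing exactly one cycle C), endowed with an orientation σ of its edges, and let v be a sink of σ. Then there exists a vertex u with out-degree at least 2 under σ such that depth(u) < max{1, depth(v)}, where depth(w) is the distance from w to the cycle C in (V, R). In particular, if depth(v) = 0, u can be chosen on C with both outgoing arcs along C. -/
/-!
Orient the edges of the cycle `C`: its `|C|` arcs have their tails among the `|C|` vertices of
`C`. If the sink `v` lies on `C`, no tail is `v`, so by pigeonhole some vertex of `C` is the tail
of two cycle arcs. If `v` lies off `C`, walk from `v` towards `C`: the arc from the first vertex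
`p` to `v` is forced, and as long as the current vertex has no second out-arc, the edge to its
parent must point back at it. Either some vertex on the way has two out-arcs, or the walk reaches
`C` through an arc leaving `C`, and then the `|C| + 1` arcs made of the cycle and this one have
their tails among `|C|` vertices.
-/

open SimpleGraph

theorem exists_ne_rel_of_card_lt {V : Type*} {σ : V → V → Prop} {E : Finset (Sym2 V)}
    {T : Finset V} (hE : ∀ e ∈ E, ∃ a b, e = s(a, b) ∧ σ a b ∧ a ∈ T)
    (hlt : T.card < E.card) :
    ∃ u ∈ T, ∃ a b, a ≠ b ∧ σ u a ∧ σ u b ∧ s(u, a) ∈ E ∧ s(u, b) ∈ E := by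
  choose tail head hmk hσ hT using hE
  obtain ⟨⟨e₁, he₁⟩, -, ⟨e₂, he₂⟩, -, hne, heq⟩ :=
    Finset.exists_ne_map_eq_of_card_lt_of_maps_to (s := E.attach) (t := T)
      (f := fun e => tail e.1 e.2) (by simpa using hlt) (fun e _ => hT e.1 e.2)
  have h₁ := hmk e₁ he₁
  have h₂ : e₂ = s(tail e₁ he₁, head e₂ he₂) := heq ▸ hmk e₂ he₂
  refine ⟨tail e₁ he₁, hT _ _, head e₁ he₁, head e₂ he₂, ?_, hσ _ _, heq ▸ hσ _ _,
    h₁ ▸ he₁, h₂ ▸ he₂⟩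
  rintro hhead
  exact hne (Subtype.ext (h₁.trans (hhead ▸ h₂.symm)))

namespace SimpleGraph.Walk

variable {V : Type*} {G : SimpleGraph V} {σ : V → V → Prop}

theorem exists_rel_of_mem_edges {u w : V} (p : G.Walk u w)
    (htot : ∀ a b, G.Adj a b → σ a b ∨ σ b a) {e : Sym2 V} (he : e ∈ p.edges) :
    ∃ a b, e = s(a, b) ∧ σ a b ∧ a ∈ p.support := by
  induction e using Sym2.ind with
  | h a b =>
    rcases htot a b (p.adj_of_mem_edges he) with hab | hba
    · exact ⟨a, b, rfl, hab, p.fst_mem_support_of_mem_edges he⟩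
    · exact ⟨b, a, Sym2.eq_swap, hba, p.snd_mem_support_of_mem_edges he⟩

theorem IsCycle.card_support_toFinset [DecidableEq V] {x : V} {c : G.Walk x x}
    (hc : c.IsCycle) : c.support.toFinset.card = c.length := by
  rw [← c.cons_tail_support, List.toFinset_cons,
    Finset.insert_eq_of_mem (List.mem_toFinset.mpr (end_mem_tail_support hc.not_nil)),
    List.toFinset_card_of_nodup hc.support_nodup, List.length_tail, length_support]
  rfl

theorem IsCycle.exists_ne_rel_of_sink_mem_support {x v : V} {c : G.Walk x x}
    (hc : c.IsCycle) (htot : ∀ a b, G.Adj a b → σ a b ∨ σ b a) (hv : v ∈ c.support)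
    (hsink : ∀ w, ¬ σ v w) :
    ∃ u a b, a ≠ b ∧ σ u a ∧ σ u b ∧ s(u, a) ∈ c.edges ∧ s(u, b) ∈ c.edges := by
  classical
  have hlt : (c.support.toFinset.erase v).card < c.edges.toFinset.card := by
    rw [Finset.card_erase_of_mem (List.mem_toFinset.mpr hv), hc.card_support_toFinset,
      List.toFinset_card_of_nodup hc.edges_nodup, length_edges]
    have := hc.three_le_length
    omega
  have htails : ∀ e ∈ c.edges.toFinset, ∃ a b, e = s(a, b) ∧ σ a b ∧
      a ∈ c.support.toFinset.erase v := fun e he => by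
    obtain ⟨a, b, rfl, hσ, ha⟩ := c.exists_rel_of_mem_edges htot (List.mem_toFinset.mp he)
    exact ⟨a, b, rfl, hσ,
      Finset.mem_erase.mpr ⟨fun h => hsink b (h ▸ hσ), List.mem_toFinset.mpr ha⟩⟩
  obtain ⟨u, -, a, b, hab, hua, hub, hea, heb⟩ := exists_ne_rel_of_card_lt htails hlt
  exact ⟨u, a, b, hab, hua, hub, List.mem_toFinset.mp hea, List.mem_toFinset.mp heb⟩

theorem IsCycle.exists_ne_rel_of_rel_not_mem_support {x w y : V} {c : G.Walk x x}
    (hc : c.IsCycle) (htot : ∀ a b, G.Adj a b → σ a b ∨ σ b a) (hw : w ∈ c.support)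
    (hy : y ∉ c.support) (hwy : σ w y) :
    ∃ u ∈ c.support, ∃ a b, a ≠ b ∧ σ u a ∧ σ u b := by
  classical
  have hnew : s(w, y) ∉ c.edges.toFinset := fun h =>
    hy (c.snd_mem_support_of_mem_edges (List.mem_toFinset.mp h))
  have hlt : c.support.toFinset.card < (insert s(w, y) c.edges.toFinset).card := by
    rw [Finset.card_insert_of_notMem hnew, hc.card_support_toFinset,
      List.toFinset_card_of_nodup hc.edges_nodup, length_edges]
    omega
  have htails : ∀ e ∈ insert s(w, y) c.edges.toFinset, ∃ a b, e = s(a, b) ∧ σ a b ∧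
      a ∈ c.support.toFinset := fun e he => by
    rcases Finset.mem_insert.mp he with rfl | he
    · exact ⟨w, y, rfl, hwy, List.mem_toFinset.mpr hw⟩
    · obtain ⟨a, b, rfl, hσ, ha⟩ := c.exists_rel_of_mem_edges htot (List.mem_toFinset.mp he)
      exact ⟨a, b, rfl, hσ, List.mem_toFinset.mpr ha⟩
  obtain ⟨u, hu, a, b, hab, hua, hub, -⟩ := exists_ne_rel_of_card_lt htails hlt
  exact ⟨u, List.mem_toFinset.mp hu, a, b, hab, hua, hub⟩

def IsDistToSupport {s t : V} (p : G.Walk s t) (depth : V → ℕ) : Prop :=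
  ∀ w, IsLeast {d : ℕ | ∃ y ∈ p.support, G.dist w y = d} (depth w)

namespace IsDistToSupport

variable {s t : V} {p : G.Walk s t} {depth : V → ℕ}

theorem eq_zero_of_mem_support (hdepth : p.IsDistToSupport depth) {w : V}
    (hw : w ∈ p.support) : depth w = 0 :=
  Nat.le_zero.mp ((hdepth w).2 ⟨w, hw, dist_self⟩)

theorem mem_support_of_eq_zero (hdepth : p.IsDistToSupport depth) (hconn : G.Connected)
    {w : V} (hw : depth w = 0) : w ∈ p.support := by
  obtain ⟨y, hy, hdist⟩ := (hdepth w).1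
  rwa [hconn.dist_eq_zero_iff.mp (hdist.trans hw)]

theorem exists_adj_lt (hdepth : p.IsDistToSupport depth) (hconn : G.Connected) {w : V}
    (hw : 0 < depth w) : ∃ z, G.Adj w z ∧ depth z < depth w := by
  obtain ⟨y, hy, hdist⟩ := (hdepth w).1
  obtain ⟨q, hq⟩ := hconn.exists_walk_length_eq_dist w y
  cases q with
  | nil => simp_all
  | @cons _ z _ hwz q =>
    refine ⟨z, hwz, ?_⟩
    have := (hdepth z).2 ⟨y, hy, rfl⟩
    have := dist_le q
    simp only [length_cons] at hq
    omega

theorem exists_ne_rel_of_rel_lt {x : V} {c : G.Walk x x} (hdepth : c.IsDistToSupport depth)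
    (hconn : G.Connected) (hc : c.IsCycle) {σ : V → V → Prop}
    (htot : ∀ a b, G.Adj a b → σ a b ∨ σ b a)
    {w y : V} (hwy : σ w y) (hdep : depth w < depth y) :
    ∃ u, (∃ a b, a ≠ b ∧ σ u a ∧ σ u b) ∧ depth u ≤ depth w := by
  induction hn : depth w using Nat.strong_induction_on generalizing w y with
  | _ n ih =>
    rcases Nat.eq_zero_or_pos n with rfl | hpos
    · have hy : y ∉ c.support := fun hy => by
        rw [hdepth.eq_zero_of_mem_support hy] at hdep; omega
      obtain ⟨u, hu, hσ⟩ := hc.exists_ne_rel_of_rel_not_mem_support htot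
        (hdepth.mem_support_of_eq_zero hconn hn) hy hwy
      exact ⟨u, hσ, (hdepth.eq_zero_of_mem_support hu).le⟩
    · obtain ⟨z, hwz, hz⟩ := hdepth.exists_adj_lt hconn (hn ▸ hpos)
      rcases htot w z hwz with hσ | hσ
      · exact ⟨w, ⟨y, z, fun h => by subst h; omega, hwy, hσ⟩, hn.le⟩
      · obtain ⟨u, hu, hle⟩ := ih _ (hn ▸ hz) hσ (by omega) rfl
        exact ⟨u, hu, by omega⟩

end IsDistToSupport

end SimpleGraph.Walk

theorem sink_degree_lemma_general {V : Type*}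
    (G : SimpleGraph V)
    (hconn : G.Connected)
    (x : V) (c : G.Walk x x) (hc : c.IsCycle)
    (σ : V → V → Prop)
    (hor : ∀ u v, G.Adj u v → (σ u v ↔ ¬ σ v u))
    (v : V) (hsink : ∀ w, ¬ σ v w)
    (depth : V → ℕ)
    (hdepth : ∀ w, IsLeast {d : ℕ | ∃ y ∈ c.support, G.dist w y = d} (depth w)) :
    ∃ u : V, (∃ a b, a ≠ b ∧ σ u a ∧ σ u b) ∧ depth u < max 1 (depth v) ∧
      (depth v = 0 → ∃ a b, a ≠ b ∧ σ u a ∧ σ u b ∧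
        s(u, a) ∈ c.edges ∧ s(u, b) ∈ c.edges) := by
  have htot : ∀ a b, G.Adj a b → σ a b ∨ σ b a := fun a b hab =>
    (em (σ a b)).imp_right (hor b a hab.symm).mpr
  have hdepth : c.IsDistToSupport depth := hdepth
  rcases Nat.eq_zero_or_pos (depth v) with hv | hv
  · obtain ⟨u, a, b, hab, hua, hub, hea, heb⟩ := hc.exists_ne_rel_of_sink_mem_support htot
      (hdepth.mem_support_of_eq_zero hconn hv) hsink
    have hu : depth u = 0 := hdepth.eq_zero_of_mem_support (c.fst_mem_support_of_mem_edges hea)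
    exact ⟨u, ⟨a, b, hab, hua, hub⟩, by omega, fun _ => ⟨a, b, hab, hua, hub, hea, heb⟩⟩
  · obtain ⟨p, hvp, hp⟩ := hdepth.exists_adj_lt hconn hv
    have hpv : σ p v := (htot v p hvp).resolve_left (hsink p)
    obtain ⟨u, hu, hle⟩ := hdepth.exists_ne_rel_of_rel_lt hconn hc htot hpv hp
    exact ⟨u, hu, by omega, by omega⟩

/-- Sink-degree lemma for unicyclic graphs: let `(V, R)` be a connected unicyclic
graph (as many edges as vertices) with cycle `c`, endowed with an orientation `σ`,
and let `v` be a sink of `σ`.  Then there is a vertex `u` with at least two outgoing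
arcs whose depth (distance to the cycle) is less than `max 1 (depth v)`; moreover if
`depth v = 0` then `u` can be chosen with both outgoing arcs along the cycle. -/
theorem sink_degree_lemma {V : Type*} [Fintype V] [DecidableEq V]
    (G : SimpleGraph V) [DecidableRel G.Adj]
    (hconn : G.Connected) (hcard : G.edgeFinset.card = Fintype.card V)
    (x : V) (c : G.Walk x x) (hc : c.IsCycle)
    (σ : V → V → Prop)
    (hsub : ∀ u v, σ u v → G.Adj u v)
    (hor : ∀ u v, G.Adj u v → (σ u v ↔ ¬ σ v u))
    (v : V) (hsink : ∀ w, ¬ σ v w)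
    (depth : V → ℕ)
    (hdepth : ∀ w, IsLeast {d : ℕ | ∃ y ∈ c.support, G.dist w y = d} (depth w)) :
    ∃ u : V, (∃ a b, a ≠ b ∧ σ u a ∧ σ u b) ∧ depth u < max 1 (depth v) ∧
      (depth v = 0 → ∃ a b, a ≠ b ∧ σ u a ∧ σ u b ∧
        s(u, a) ∈ c.edges ∧ s(u, b) ∈ c.edges) :=
  sink_degree_lemma_general G hconn x c hc σ hor v hsink depth hdepth
end

section
/- Let G = (V, A) be a bi-directed graph with root r, and let S ⊆ A be such that (V, S) has a unique minimal cluster. Let U be the set of vertices that cannot reach r in (V, S), and let Ĥ be the DAG obtained by contracting the strongly connected components of the induced subgraph (U, S[U]). Then Ĥ has a unique sink, namely the strongly connected component equal to the unique minimal cluster, and Ĥ is root-connected with that component as root (every vertex of Ĥ has a directed path to it). -/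
private lemma exists_minimal_cluster' {V : Type*} [Fintype V]
    (S : V → V → Prop) (r : V) :
    ∀ n (D : Set V), D.ncard ≤ n → r ∉ D → D.Nonempty →
      (∀ u ∈ D, ∀ v, S u v → v ∈ D) →
      ∃ D' : Set V, D' ⊆ D ∧ r ∉ D' ∧ D'.Nonempty ∧
        (∀ u ∈ D', ∀ v, S u v → v ∈ D') ∧
        (∀ D'' : Set V, D'' ⊆ D' → D'' ≠ D' → D''.Nonempty →
          ¬ (∀ u ∈ D'', ∀ v, S u v → v ∈ D'')) := by
  intro n
  induction n with
  | zero =>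
    intro D hcard hr hne hcl
    exfalso
    have := Set.ncard_pos (Set.toFinite D) |>.mpr hne
    omega
  | succ n ih =>
    intro D hcard hr hne hcl
    by_cases hm : ∀ D'' : Set V, D'' ⊆ D → D'' ≠ D → D''.Nonempty →
        ¬ (∀ u ∈ D'', ∀ v, S u v → v ∈ D'')
    · exact ⟨D, subset_rfl, hr, hne, hcl, hm⟩
    · push_neg at hm
      obtain ⟨D'', hsub, hne', hne'', hcl''⟩ := hm
      have hlt : D''.ncard < D.ncard :=
        Set.ncard_lt_ncard (ssubset_of_subset_of_ne hsub hne') (Set.toFinite D)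
      exact (ih D'' (by omega) (fun h => hr (hsub h)) hne'' hcl'').imp
        (fun D' h => ⟨h.1.trans hsub, h.2⟩)


/-- Let `G = (V, A)` be bi-directed with root `r`, and `S ⊆ A` be such that `(V, S)`
has a unique minimal cluster `C`.  Let `U` be the set of vertices that cannot reach
`r` in `(V, S)`.  Then, in the condensation of `(U, S[U])`: `C` lies inside `U`,
every vertex of `U` can reach `C` within `(U, S[U])` (root-connectedness of the
condensation with root `[C]`), and every sink component of `(U, S[U])` is contained
in `C` (uniqueness of the sink). -/
theorem condensation_unique_sink {V : Type*} [Fintype V]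
    (A S : V → V → Prop) (hbi : ∀ u v, A u v → A v u)
    (hS : ∀ u v, S u v → A u v) (r : V)
    (C : Set V) (hrC : r ∉ C) (hCne : C.Nonempty)
    (hclu : ∀ u ∈ C, ∀ v, S u v → v ∈ C)
    (hmin : ∀ C' : Set V, C' ⊆ C → C' ≠ C → C'.Nonempty →
      ¬ (∀ u ∈ C', ∀ v, S u v → v ∈ C'))
    (huniq : ∀ D : Set V, r ∉ D → D.Nonempty → (∀ u ∈ D, ∀ v, S u v → v ∈ D) →
      (∀ D' : Set V, D' ⊆ D → D' ≠ D → D'.Nonempty →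
        ¬ (∀ u ∈ D', ∀ v, S u v → v ∈ D')) → D = C) :
    let U : Set V := {v | ¬ Relation.ReflTransGen S v r}
    let SU : V → V → Prop := fun a b => S a b ∧ a ∈ U ∧ b ∈ U
    C ⊆ U ∧
    (∀ x ∈ U, ∃ y ∈ C, Relation.ReflTransGen SU x y) ∧
    (∀ x ∈ U, (∀ y ∈ U, Relation.ReflTransGen SU x y → Relation.ReflTransGen SU y x)
      → x ∈ C) := by
  intro U SU
  have hrU : r ∉ U := by
    intro h
    exact h Relation.ReflTransGen.refl
  -- C ⊆ U
  have hCU : C ⊆ U := by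
    intro c hc hcr
    have all : ∀ z, Relation.ReflTransGen S c z → z ∈ C := by
      intro z h
      induction h with
      | refl => exact hc
      | tail _ hs ih => exact hclu _ ih _ hs
    exact hrC (all r hcr)
  -- every x ∈ U reaches C inside U
  have hreach : ∀ x ∈ U, ∃ y ∈ C, Relation.ReflTransGen SU x y := by
    intro x hx
    set D : Set V := {v | v ∈ U ∧ Relation.ReflTransGen SU x v} with hD
    have hrD : r ∉ D := fun h => hrU h.1
    have hneD : D.Nonempty := ⟨x, hx, Relation.ReflTransGen.refl⟩
    have hclD : ∀ u ∈ D, ∀ v, S u v → v ∈ D := by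
      intro u hu v hs
      by_cases hv : v ∈ U
      · exact ⟨hv, hu.2.tail ⟨hs, hu.1, hv⟩⟩
      · exfalso
        have hvr : Relation.ReflTransGen S v r := by
          by_contra h; exact hv h
        exact hu.1 (Relation.ReflTransGen.head hs hvr)
    obtain ⟨D', hsub, hrD', hneD', hclD', hminD'⟩ :=
      exists_minimal_cluster' S r D.ncard D le_rfl hrD hneD hclD
    have : D' = C := huniq D' hrD' hneD' hclD' hminD'
    obtain ⟨y, hy⟩ := hCne
    have : y ∈ D := hsub (this ▸ hy)
    exact ⟨y, hy, this.2⟩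
  refine ⟨hCU, hreach, ?_⟩
  intro x hx hsink
  obtain ⟨y, hyC, hxy⟩ := hreach x hx
  have hyx : Relation.ReflTransGen SU y x := hsink y (hCU hyC) hxy
  have all : ∀ z, Relation.ReflTransGen SU y z → z ∈ C := by
    intro z h
    induction h with
    | refl => exact hyC
    | tail _ hs ih => exact hclu _ ih _ hs.1
  exact all x hyx
end

section
/- Let D be a finite directed acyclic graph that is root-connected with root t (every vertex has a directed path to t), and let s be any vertex of D. Let W be the set of vertices reachable from s in D. If D' is obtained from D by reversing all arcs of D with both endpoints in W, then D' is also acyclic. -/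
/-- Arc-reversal acyclicity: let `D = (V, A)` be a finite DAG in which every vertex
has a directed path to `t`, let `s` be a vertex and `W` the set of vertices
reachable from `s`.  Reversing all arcs with both endpoints in `W` yields an acyclic
digraph. -/
theorem reverse_inside_reachable_acyclic {V : Type*} [Fintype V]
    (A : V → V → Prop) (t : V)
    (hacyc : ∀ v : V, ¬ Relation.TransGen A v v)
    (hroot : ∀ v : V, Relation.ReflTransGen A v t)
    (s : V) :
    let W : Set V := {w | Relation.ReflTransGen A s w}
    let A' : V → V → Prop :=
      fun a b => (A a b ∧ ¬ (a ∈ W ∧ b ∈ W)) ∨ (A b a ∧ a ∈ W ∧ b ∈ W)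
    ∀ v : V, ¬ Relation.TransGen A' v v := by
  intro W A' v hv
  have hclosed : ∀ a b, a ∈ W → A a b → b ∈ W := fun a b ha hab =>
    Relation.ReflTransGen.tail ha hab
  have key : ∀ a b, Relation.TransGen A' a b →
      (a ∈ W → b ∈ W ∧ Relation.TransGen A b a) ∧
      (a ∉ W → b ∈ W ∨ Relation.TransGen A a b) := by
    intro a b h
    induction h with
    | single hab =>
      constructor
      · intro ha
        rcases hab with ⟨h1, h2⟩ | ⟨h1, h2, h3⟩
        · exact absurd ⟨ha, hclosed _ _ ha h1⟩ h2
        · exact ⟨h3, Relation.TransGen.single h1⟩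
      · intro ha
        rcases hab with ⟨h1, h2⟩ | ⟨h1, h2, h3⟩
        · exact Or.inr (Relation.TransGen.single h1)
        · exact absurd h2 ha
    | tail hab hbc ih =>
      constructor
      · intro ha
        obtain ⟨hb, hba⟩ := ih.1 ha
        rcases hbc with ⟨h1, h2⟩ | ⟨h1, h2, h3⟩
        · exact absurd ⟨hb, hclosed _ _ hb h1⟩ h2
        · exact ⟨h3, hba.head h1⟩
      · intro ha
        rcases ih.2 ha with hb | hab'
        · rcases hbc with ⟨h1, h2⟩ | ⟨h1, h2, h3⟩
          · exact absurd ⟨hb, hclosed _ _ hb h1⟩ h2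
          · exact Or.inl h3
        · rcases hbc with ⟨h1, h2⟩ | ⟨h1, h2, h3⟩
          · exact Or.inr (hab'.tail h1)
          · exact Or.inl h3
  by_cases hv' : v ∈ W
  · exact hacyc v ((key v v hv).1 hv').2
  · rcases (key v v hv).2 hv' with h | h
    · exact hv' h
    · exact hacyc v h
end

section
/- Let D be a finite directed acyclic graph, root-connected toward a sink t, let s be a vertex, W the set of vertices reachable from s in D, and D' the graph obtained by reversing all arcs inside W. Then the set of vertices reachable from t in D' equals W. -/
/-- Let `D = (V, A)` be a finite DAG in which every vertex has a directed path to
`t`, let `s` be a vertex and `W` the set of vertices reachable from `s` in `D`.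
After reversing all arcs with both endpoints inside `W`, the set of vertices
reachable from `t` equals `W`. -/
theorem reachable_from_sink_after_reversal {V : Type*} [Fintype V]
    (A : V → V → Prop) (t : V)
    (hacyc : ∀ v : V, ¬ Relation.TransGen A v v)
    (hroot : ∀ v : V, Relation.ReflTransGen A v t)
    (s : V) :
    let W : Set V := {w | Relation.ReflTransGen A s w}
    let A' : V → V → Prop :=
      fun a b => (A a b ∧ ¬ (a ∈ W ∧ b ∈ W)) ∨ (A b a ∧ a ∈ W ∧ b ∈ W)
    {w | Relation.ReflTransGen A' t w} = W := by
  intro W A'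
  ext w
  simp only [Set.mem_setOf_eq]
  constructor
  · intro h
    induction h with
    | refl => exact hroot s
    | tail _ hbc ih =>
      rcases hbc with ⟨hA, _⟩ | ⟨_, _, hc⟩
      · exact Relation.ReflTransGen.tail ih hA
      · exact hc
  · intro hw
    have key : ∀ u, Relation.ReflTransGen A u t → u ∈ W →
        Relation.ReflTransGen A' t u := by
      intro u hu
      induction hu using Relation.ReflTransGen.head_induction_on with
      | refl => intro _; exact Relation.ReflTransGen.refl
      | head hA _ ih =>
        rename_i a c _
        intro ha
        have hc : c ∈ W := Relation.ReflTransGen.tail ha hA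
        exact Relation.ReflTransGen.tail (ih hc) (Or.inr ⟨hA, hc, ha⟩)
    exact key w (hroot w) hw
end

section
/- Let H = (U, S[U]) be a digraph and W ⊆ U a union of strongly connected components of H such that no arc of H leaves W. If H' is obtained from H by reversing all arcs with both endpoints in W, then H and H' have the same strongly connected components. -/
open Relation

private lemma within_W {U : Type*} (S : U → U → Prop) (W : Set U)
    (hc : ∀ x ∈ W, ∀ y : U, S x y → y ∈ W) {x y : U} (hx : x ∈ W)
    (h : ReflTransGen S x y) :
    ReflTransGen (fun a b => S a b ∧ a ∈ W ∧ b ∈ W) x y ∧ y ∈ W := by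
  induction h with
  | refl => exact ⟨ReflTransGen.refl, hx⟩
  | tail hab hbc ih =>
      exact ⟨ih.1.tail ⟨hbc, ih.2, hc _ ih.2 _ hbc⟩, hc _ ih.2 _ hbc⟩

private lemma outside_W {U : Type*} (S : U → U → Prop) (W : Set U)
    (hc : ∀ x ∈ W, ∀ y : U, S x y → y ∈ W) {x y : U} (hx : x ∉ W)
    (h : ReflTransGen S x y) :
    y ∈ W ∨ (ReflTransGen (fun a b => S a b ∧ a ∉ W ∧ b ∉ W) x y ∧ y ∉ W) := by
  induction h with
  | refl => exact Or.inr ⟨ReflTransGen.refl, hx⟩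
  | @tail b c hab hbc ih =>
      rcases ih with hb | ⟨hp, hbW⟩
      · exact Or.inl (hc _ hb _ hbc)
      · by_cases hcW : c ∈ W
        · exact Or.inl hcW
        · exact Or.inr ⟨hp.tail ⟨hbc, hbW, hcW⟩, hcW⟩

private lemma forward_dir {U : Type*} (S : U → U → Prop) (W : Set U)
    (hc : ∀ x ∈ W, ∀ y : U, S x y → y ∈ W) {x y : U}
    (hxy : ReflTransGen S x y) (hyx : ReflTransGen S y x) :
    ReflTransGen (fun a b => (S a b ∧ ¬ (a ∈ W ∧ b ∈ W)) ∨ (S b a ∧ a ∈ W ∧ b ∈ W)) x y ∧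
    ReflTransGen (fun a b => (S a b ∧ ¬ (a ∈ W ∧ b ∈ W)) ∨ (S b a ∧ a ∈ W ∧ b ∈ W)) y x := by
  by_cases hx : x ∈ W
  · obtain ⟨pxy, hy⟩ := within_W S W hc hx hxy
    obtain ⟨pyx, -⟩ := within_W S W hc hy hyx
    constructor
    · exact ReflTransGen.mono
        (fun a b h => Or.inr ⟨h.1, h.2.2, h.2.1⟩) _ _ (Relation.reflTransGen_swap.mpr pyx)
    · exact ReflTransGen.mono
        (fun a b h => Or.inr ⟨h.1, h.2.2, h.2.1⟩) _ _ (Relation.reflTransGen_swap.mpr pxy)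
  · have hy : y ∉ W := fun hyW => hx (within_W S W hc hyW hyx).2
    rcases outside_W S W hc hx hxy with h | ⟨pxy, -⟩
    · exact absurd h hy
    rcases outside_W S W hc hy hyx with h | ⟨pyx, -⟩
    · exact absurd h hx
    exact ⟨ReflTransGen.mono (fun a b h => Or.inl ⟨h.1, fun hb => h.2.1 hb.1⟩) _ _ pxy,
           ReflTransGen.mono (fun a b h => Or.inl ⟨h.1, fun hb => h.2.1 hb.1⟩) _ _ pyx⟩

/-- Let `H` be a finite digraph on `U`, and `W` a union of strongly connected
components of `H` with no arc of `H` leaving `W`.  If `H'` is obtained from `H` by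
reversing all arcs with both endpoints in `W`, then `H` and `H'` have exactly the
same strongly connected components. -/
theorem scc_invariant_under_reversal {U : Type*} [Fintype U]
    (S : U → U → Prop) (W : Set U)
    (hW_scc : ∀ x ∈ W, ∀ y : U,
      (Relation.ReflTransGen S x y ∧ Relation.ReflTransGen S y x) → y ∈ W)
    (hW_closed : ∀ x ∈ W, ∀ y : U, S x y → y ∈ W) :
    let S' : U → U → Prop :=
      fun a b => (S a b ∧ ¬ (a ∈ W ∧ b ∈ W)) ∨ (S b a ∧ a ∈ W ∧ b ∈ W)
    ∀ x y : U,
      (Relation.ReflTransGen S x y ∧ Relation.ReflTransGen S y x) ↔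
      (Relation.ReflTransGen S' x y ∧ Relation.ReflTransGen S' y x) := by
  intro S' x y
  have hc' : ∀ a ∈ W, ∀ b : U, S' a b → b ∈ W := by
    rintro a ha b (⟨hab, hn⟩ | ⟨-, -, hb⟩)
    · exact absurd ⟨ha, hW_closed a ha b hab⟩ hn
    · exact hb
  have key : ∀ a b : U,
      ((fun a b => (S' a b ∧ ¬ (a ∈ W ∧ b ∈ W)) ∨ (S' b a ∧ a ∈ W ∧ b ∈ W)) a b) → S a b := by
    rintro a b (⟨(⟨h, -⟩ | ⟨h, hW⟩), hn2⟩ | ⟨(⟨h, hn⟩ | ⟨h, hW⟩), haW, hbW⟩)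
    · exact h
    · exact absurd hW hn2
    · exact absurd ⟨hbW, haW⟩ hn
    · exact h
  constructor
  · rintro ⟨h1, h2⟩
    exact forward_dir S W hW_closed h1 h2
  · rintro ⟨h1, h2⟩
    obtain ⟨p1, p2⟩ := forward_dir S' W hc' h1 h2
    exact ⟨ReflTransGen.mono (key) _ _ p1, ReflTransGen.mono (key) _ _ p2⟩
end

section
/- Let G = (V, E) be a finite connected undirected graph with root r, and suppose σ : V \ {r} → V (with σ(v) adjacent to v) induces a digraph with exactly one directed cycle C. Fix u on C with σ(u) = u', fix any edge (v₀, v₁) between the tree component containing r and the unicyclic component, and let v₁, v₂, …, v_ℓ = u be the path from v₁ to u following σ. Define σ_fix by σ_fix(v_i) = v_{i-1} for 1 ≤ i ≤ ℓ and σ_fix(v) = σ(v) otherwise. Then σ_fix induces a digraph with no directed cycle (i.e., a spanning tree oriented toward r). -/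
/-! If `v` lay on a `σfix`-cycle avoiding `r`, its forward orbit could not meet `vs`: from any
vertex of `vs`, `σfix` walks back to `v₁`, steps to `v₀` and then follows `σ` down to `r`. The
`σ`-path from `v₀` to `r` never enters `vs`, because every vertex of `vs` is `σ`-reachable from
`v₁`, which does not reach `r`. So `σfix` agrees with `σ` on the orbit, which is then a `σ`-cycle
avoiding `r`, hence equal to `C` by uniqueness; but `u ∈ C` lies on `vs`. -/

/-- `C` is the vertex set of a directed cycle of the functional digraph of `σ`. -/
def IsFunCycleSet {V : Type*} (σ : V → V) (C : Set V) : Prop :=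
  C.Nonempty ∧ (∀ x ∈ C, σ x ∈ C) ∧ (∀ x ∈ C, ∀ y ∈ C, ∃ n : ℕ, σ^[n] x = y) ∧
    ∀ x ∈ C, ∃ n : ℕ, 0 < n ∧ σ^[n] x = x

/-- The data of the cycle-popping repair construction: `σ` is an out-neighbour
assignment on the connected rooted graph `(G, r)` whose functional digraph has a
unique directed cycle `C`; `u ∈ C`; `(v₀, v₁)` is an edge of `G` with `v₀` in the
tree component of `r` and `v₁` in the unicyclic component; `vs = [v₁, …, v_ℓ = u]`
is the σ-path from `v₁` to `u`; and `σfix` reverses this path (`σfix vᵢ = vᵢ₋₁`,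
with `σfix v₁ = v₀`) and agrees with `σ` elsewhere. -/
def CPRepair {V : Type*} (G : SimpleGraph V) (r : V) (σ : V → V) (C : Set V)
    (u v₀ : V) (σfix : V → V) (vs : List V) : Prop :=
  (∀ v, v ≠ r → G.Adj v (σ v)) ∧
  IsFunCycleSet σ C ∧ r ∉ C ∧
  (∀ C' : Set V, IsFunCycleSet σ C' → r ∉ C' → C' = C) ∧
  u ∈ C ∧
  vs ≠ [] ∧ vs.Nodup ∧ vs.getLast? = some u ∧ r ∉ vs ∧
  List.Chain' (fun a b => σ a = b) vs ∧
  Relation.ReflTransGen (fun a b => a ≠ r ∧ σ a = b) v₀ r ∧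
  (∀ v₁ ∈ vs.head?, ¬ Relation.ReflTransGen (fun a b => a ≠ r ∧ σ a = b) v₁ r ∧
    G.Adj v₀ v₁ ∧ σfix v₁ = v₀) ∧
  List.Chain' (fun a b => σfix b = a) vs ∧
  (∀ x, x ∉ vs → σfix x = σ x)


open Relation

section RightUnique

variable {α : Type*} {R : α → α → Prop}

theorem Relator.RightUnique.reflTransGen_of_transGen_self (hR : Relator.RightUnique R) {v x : α}
    (hv : TransGen R v v) (hx : ReflTransGen R v x) : ReflTransGen R x v := by
  induction hx with
  | refl => exact .refl
  | @tail x y _ hxy ih =>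
    obtain ⟨y', hxy', hy'v⟩ : ∃ y', R x y' ∧ ReflTransGen R y' v := by
      rcases ih.cases_head with rfl | hstep
      · exact TransGen.head'_iff.mp hv
      · exact hstep
    exact hR hxy hxy' ▸ hy'v

theorem Relator.RightUnique.transGen_self_of_reflTransGen (hR : Relator.RightUnique R) {v x : α}
    (hv : TransGen R v v) (hx : ReflTransGen R v x) : TransGen R x x :=
  (TransGen.trans_right (hR.reflTransGen_of_transGen_self hv hx) hv).trans_left hx

end RightUnique

theorem Relation.ReflTransGen.mono_on_path {α : Type*} {R R' : α → α → Prop} {a b : α}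
    (h : ReflTransGen R a b)
    (hRR' : ∀ x y, ReflTransGen R a x → R x y → ReflTransGen R y b → R' x y) :
    ReflTransGen R' a b := by
  suffices ∀ c, ReflTransGen R a c → ReflTransGen R c b → ReflTransGen R' a c from this b h .refl
  intro c hac hcb
  induction hac with
  | refl => exact .refl
  | @tail x y hax hxy ih => exact (ih (.head hxy hcb)).tail (hRR' x y hax hxy hcb)

theorem List.IsChain.reflTransGen_of_mem {α : Type*} {R : α → α → Prop} {l : List α}
    (hl : l.IsChain R) {a b : α} (ha : a ∈ l.head?) (hb : b ∈ l) : ReflTransGen R a b :=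
  hl.induction (ReflTransGen R a) l (fun _ _ hxy hax => hax.tail hxy)
    (fun hne => by
      rw [List.head?_eq_some_head hne, Option.mem_some_iff] at ha
      exact ha ▸ .refl) b hb

theorem IsFunCycleSet.congr {V : Type*} {f g : V → V} {C : Set V} (hC : IsFunCycleSet g C)
    (hfg : Set.EqOn f g C) : IsFunCycleSet f C := by
  obtain ⟨hne, hmaps, hconn, hret⟩ := hC
  have hiter : ∀ n, ∀ x ∈ C, f^[n] x = g^[n] x := by
    intro n
    induction n with
    | zero => simp
    | succ n ih =>
      intro x hx
      rw [Function.iterate_succ_apply, Function.iterate_succ_apply, hfg hx, ih _ (hmaps x hx)]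
  refine ⟨hne, fun x hx => hfg hx ▸ hmaps x hx, fun x hx y hy => ?_, fun x hx => ?_⟩
  · obtain ⟨n, hn⟩ := hconn x hx y hy
    exact ⟨n, hiter n x hx ▸ hn⟩
  · obtain ⟨n, hn, hnx⟩ := hret x hx
    exact ⟨n, hn, hiter n x hx ▸ hnx⟩

def rootedStep {V : Type*} (r : V) (f : V → V) (a b : V) : Prop := a ≠ r ∧ f a = b

section rootedStep

variable {V : Type*} {r : V} {f : V → V}

theorem rootedStep_rightUnique : Relator.RightUnique (rootedStep r f) :=
  fun _ _ _ hb hc => hb.2.symm.trans hc.2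

theorem exists_iterate_eq_of_reflTransGen {a b : V} (h : ReflTransGen (rootedStep r f) a b) :
    ∃ n, f^[n] a = b := by
  induction h with
  | refl => exact ⟨0, rfl⟩
  | tail _ hbc ih =>
    obtain ⟨n, rfl⟩ := ih
    exact ⟨n + 1, by rw [Function.iterate_succ_apply', hbc.2]⟩

theorem exists_pos_iterate_eq_of_transGen {a b : V} (h : TransGen (rootedStep r f) a b) :
    ∃ n, 0 < n ∧ f^[n] a = b := by
  obtain ⟨c, hac, hcb⟩ := TransGen.head'_iff.mp h
  obtain ⟨n, hn⟩ := exists_iterate_eq_of_reflTransGen hcb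
  exact ⟨n + 1, n.succ_pos, by rw [Function.iterate_succ_apply, hac.2, hn]⟩

theorem not_reflTransGen_root_of_transGen_self {v : V} (hv : TransGen (rootedStep r f) v v) :
    ¬ ReflTransGen (rootedStep r f) v r := fun hr =>
  have ⟨_, hstep, _⟩ := TransGen.head'_iff.mp
    (rootedStep_rightUnique.transGen_self_of_reflTransGen hv hr)
  hstep.1 rfl

theorem isFunCycleSet_of_transGen_self {v : V} (hv : TransGen (rootedStep r f) v v) :
    IsFunCycleSet f {x | ReflTransGen (rootedStep r f) v x} := by
  have hback {x} (hx : ReflTransGen (rootedStep r f) v x) :=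
    rootedStep_rightUnique.reflTransGen_of_transGen_self hv hx
  refine ⟨⟨v, .refl⟩, fun x hx => hx.tail ⟨?_, rfl⟩, fun x hx y hy => ?_, fun x hx => ?_⟩
  · rintro rfl
    exact not_reflTransGen_root_of_transGen_self hv hx
  · exact exists_iterate_eq_of_reflTransGen ((hback hx).trans hy)
  · exact exists_pos_iterate_eq_of_transGen
      (rootedStep_rightUnique.transGen_self_of_reflTransGen hv hx)

end rootedStep

theorem CPRepair.reflTransGen_root_of_mem {V : Type*} {G : SimpleGraph V} {r : V} {σ : V → V}
    {C : Set V} {u v₀ : V} {σfix : V → V} {vs : List V} (h : CPRepair G r σ C u v₀ σfix vs)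
    {w : V} (hw : w ∈ vs) : ReflTransGen (rootedStep r σfix) w r := by
  obtain ⟨-, -, -, -, -, hne, -, -, hrvs, hchain, hv₀, hv₁, hchainfix, hout⟩ := h
  obtain ⟨v₁, hhead⟩ : ∃ v₁, vs.head? = some v₁ := ⟨_, List.head?_eq_some_head hne⟩
  obtain ⟨hv₁r, -, hfix₁⟩ := hv₁ v₁ hhead
  have hne_r {x} (hx : x ∈ vs) : x ≠ r := ne_of_mem_of_not_mem hx hrvs
  have hvs_no_root {x} (hx : x ∈ vs) : ¬ ReflTransGen (rootedStep r σ) x r := fun hxr =>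
    hv₁r (((hchain.imp_of_mem_imp fun a _ ha _ hab => ⟨hne_r ha, hab⟩).reflTransGen_of_mem
      hhead hx).trans hxr)
  have hv₀fix : ReflTransGen (rootedStep r σfix) v₀ r :=
    hv₀.mono_on_path fun x y _ hxy hyr =>
      ⟨hxy.1, (hout x fun hx => hvs_no_root hx (.head hxy hyr)).trans hxy.2⟩
  have hw_v₁ : ReflTransGen (rootedStep r σfix) w v₁ :=
    reflTransGen_swap.mp <| (hchainfix.imp_of_mem_imp fun a b _ hb hab =>
      (⟨hne_r hb, hab⟩ : rootedStep r σfix b a)).reflTransGen_of_mem hhead hw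
  exact hw_v₁.trans (.head ⟨hne_r (List.mem_of_mem_head? hhead), hfix₁⟩ hv₀fix)

theorem cp_repair_acyclic_general {V : Type*}
    (G : SimpleGraph V) (r : V)
    (σ : V → V) (C : Set V) (u v₀ : V) (σfix : V → V) (vs : List V)
    (h : CPRepair G r σ C u v₀ σfix vs) :
    ∀ v : V, ¬ Relation.TransGen (fun a b => a ≠ r ∧ σfix a = b) v v := by
  intro v hv
  set orbit := {x | ReflTransGen (rootedStep r σfix) v x}
  have hr : r ∉ orbit := not_reflTransGen_root_of_transGen_self hv
  have hvs : ∀ x ∈ orbit, x ∉ vs := fun x hx hxvs =>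
    hr (hx.trans (h.reflTransGen_root_of_mem hxvs))
  obtain ⟨-, -, -, huniq, huC, -, -, hlast, -, -, -, -, -, hout⟩ := h
  have hO : IsFunCycleSet σ orbit :=
    (isFunCycleSet_of_transGen_self hv).congr fun x hx => (hout x (hvs x hx)).symm
  exact hvs u (huniq orbit hO hr ▸ huC) (List.mem_of_getLast? hlast)

/-- Cycle-popping repair: the repaired assignment `σfix` induces a digraph with no
directed cycle, i.e. a spanning tree oriented toward `r`. -/
theorem cp_repair_acyclic {V : Type*} [Fintype V]
    (G : SimpleGraph V) (hG : G.Connected) (r : V)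
    (σ : V → V) (C : Set V) (u v₀ : V) (σfix : V → V) (vs : List V)
    (h : CPRepair G r σ C u v₀ σfix vs) :
    ∀ v : V, ¬ Relation.TransGen (fun a b => a ≠ r ∧ σfix a = b) v v :=
  cp_repair_acyclic_general G r σ C u v₀ σfix vs h
end

section
/- The map φ from pairs (σ, u) — where σ is an out-neighbour assignment on a rooted connected graph with exactly one directed cycle C and u ∈ C — to triples (σ_fix, v₀, u → u') as in the cycle-popping repair construction, is injective: σ and u can be uniquely recovered from (σ_fix, v₀, u → u'). -/
/-
Reading the repaired assignment `σfix` backwards from `u` retraces the path `vs = [v₁, …, u]` and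
then steps to `v₀`. Since `v₀` reaches the root under `σ` while `v₁` does not, `v₀` is not on the
path, so `vs` is the `σfix`-orbit of `u` up to its first visit of `v₀`, a function of `σfix`, `u`
and `v₀` alone. Knowing `vs`, the assignment `σ` is recovered: it follows `vs` forwards on the path,
sends `u` to `u'` and agrees with `σfix` elsewhere; the cycle is then the unique one of `σ`.
-/

namespace List

variable {α : Type*}

theorem eq_of_isChain_apply_eq_of_notMem {f : α → α} {a v : α} {l l' : List α}
    (hl : (a :: l ++ [v]).IsChain (fun x y => f x = y))
    (hl' : (a :: l' ++ [v]).IsChain (fun x y => f x = y)) (hv : v ∉ l) (hv' : v ∉ l') :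
    l = l' := by
  induction l generalizing a l' with
  | nil =>
    cases l' with
    | nil => rfl
    | cons b l' =>
      simp only [nil_append, cons_append, isChain_cons_cons] at hl hl'
      exact absurd (hl.1 ▸ hl'.1 ▸ mem_cons_self) hv'
  | cons b l ih =>
    cases l' with
    | nil =>
      simp only [nil_append, cons_append, isChain_cons_cons] at hl hl'
      exact absurd (hl'.1 ▸ hl.1 ▸ mem_cons_self) hv
    | cons b' l' =>
      simp only [cons_append, isChain_cons_cons] at hl hl'
      obtain rfl : b = b' := hl.1.symm.trans hl'.1
      rw [ih hl.2 hl'.2 (fun h => hv (mem_cons_of_mem b h)) (fun h => hv' (mem_cons_of_mem b h))]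

theorem apply_eq_apply_of_isChain_append_singleton {f g : α → α} {b : α} {l : List α}
    (hf : (l ++ [b]).IsChain (fun x y => f x = y)) (hg : (l ++ [b]).IsChain (fun x y => g x = y)) :
    ∀ x ∈ l, f x = g x := by
  induction l with
  | nil => simp
  | cons a l ih =>
    cases l with
    | nil =>
      simp only [nil_append, cons_append, isChain_pair] at hf hg
      simp [hf, hg]
    | cons c l =>
      simp only [cons_append, isChain_cons_cons] at hf hg ih
      rintro x (_ | ⟨_, hx⟩)
      · exact hf.1.trans hg.1.symm
      · exact ih hf.2 hg.2 x hx

end List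

namespace CPRepair

variable {V : Type*} {G : SimpleGraph V} {r : V} {σ σ' : V → V} {C C' : Set V} {u v₀ : V}
  {σfix : V → V} {vs vs' : List V}

theorem exists_eq_append_singleton (h : CPRepair G r σ C u v₀ σfix vs) : ∃ w, vs = w ++ [u] := by
  obtain ⟨-, -, -, -, -, -, -, hlast, -⟩ := h
  exact List.getLast?_eq_some_iff.mp hlast

theorem v₀_notMem (h : CPRepair G r σ C u v₀ σfix vs) : v₀ ∉ vs := by
  obtain ⟨-, -, -, -, -, -, -, -, hrvs, hchain, hv₀, hhead, -, -⟩ := h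
  let R : V → V → Prop := fun a b => a ≠ r ∧ σ a = b
  have hR : vs.IsChain R :=
    hchain.imp_of_mem_imp fun a _ ha _ hab => ⟨fun har => hrvs (har ▸ ha), hab⟩
  intro hv₀vs
  refine hR.induction (fun x => ¬ Relation.ReflTransGen R x r) vs
    (fun _ _ hxy hx hy => hx (hy.head hxy))
    (fun hne => (hhead _ (List.head?_eq_some_head hne)).1) v₀ hv₀vs hv₀

theorem isChain_cons (h : CPRepair G r σ C u v₀ σfix vs) :
    (v₀ :: vs).IsChain (fun a b => σfix b = a) := by
  obtain ⟨-, -, -, -, -, -, -, -, -, -, -, hhead, hchain, -⟩ := h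
  exact List.isChain_cons.mpr ⟨fun v₁ hv₁ => (hhead v₁ hv₁).2.2, hchain⟩

theorem path_eq (h : CPRepair G r σ C u v₀ σfix vs) (h' : CPRepair G r σ' C' u v₀ σfix vs') :
    vs = vs' := by
  obtain ⟨w, rfl⟩ := h.exists_eq_append_singleton
  obtain ⟨w', rfl⟩ := h'.exists_eq_append_singleton
  have hw : (u :: w.reverse ++ [v₀]).IsChain (fun a b => σfix a = b) := by
    simpa using List.isChain_reverse.mpr h.isChain_cons
  have hw' : (u :: w'.reverse ++ [v₀]).IsChain (fun a b => σfix a = b) := by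
    simpa using List.isChain_reverse.mpr h'.isChain_cons
  have hv₀ : v₀ ∉ w.reverse := fun hv => h.v₀_notMem (by simp_all)
  have hv₀' : v₀ ∉ w'.reverse := fun hv => h'.v₀_notMem (by simp_all)
  simpa using List.eq_of_isChain_apply_eq_of_notMem hw hw' hv₀ hv₀'

theorem eq_of_apply_eq (h : CPRepair G r σ C u v₀ σfix vs) (h' : CPRepair G r σ' C' u v₀ σfix vs')
    (hu : σ u = σ' u) : σ = σ' := by
  obtain rfl := h.path_eq h'
  obtain ⟨w, rfl⟩ := h.exists_eq_append_singleton
  obtain ⟨-, -, -, -, -, -, -, -, -, hchain, -, -, -, hfix⟩ := h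
  obtain ⟨-, -, -, -, -, -, -, -, -, hchain', -, -, -, hfix'⟩ := h'
  funext x
  by_cases hx : x ∈ w ++ [u]
  · rcases List.mem_append.mp hx with hxw | hxu
    · exact List.apply_eq_apply_of_isChain_append_singleton hchain hchain' x hxw
    · rwa [List.mem_singleton.mp hxu]
  · rw [← hfix x hx, hfix' x hx]

theorem cycle_eq {G' : SimpleGraph V} {u' v₀' : V} {σfix' : V → V}
    (h : CPRepair G r σ C u v₀ σfix vs) (h' : CPRepair G' r σ C' u' v₀' σfix' vs') : C = C' := by
  obtain ⟨-, -, -, huniq, -⟩ := h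
  obtain ⟨-, hcyc', hrC', -⟩ := h'
  exact (huniq C' hcyc' hrC').symm

end CPRepair

theorem cp_repair_injective_general {V : Type*}
    (G : SimpleGraph V) (r : V)
    (σ σ' : V → V) (C C' : Set V) (u v₀ : V) (σfix : V → V) (vs vs' : List V)
    (h : CPRepair G r σ C u v₀ σfix vs)
    (h' : CPRepair G r σ' C' u v₀ σfix vs')
    (hu' : σ u = σ' u) :
    σ = σ' ∧ C = C' := by
  obtain rfl := h.eq_of_apply_eq h' hu'
  exact ⟨rfl, h.cycle_eq h'⟩

/-- Injectivity of the cycle-popping repair map `φ : (σ, u) ↦ (σfix, v₀, u → u')`: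
the original assignment `σ` (and hence its unique cycle) is uniquely determined by
the repaired spanning tree `σfix`, the vertex `v₀`, and the arc `u → u' = σ u`. -/
theorem cp_repair_injective {V : Type*} [Fintype V]
    (G : SimpleGraph V) (hG : G.Connected) (r : V)
    (σ σ' : V → V) (C C' : Set V) (u v₀ : V) (σfix : V → V) (vs vs' : List V)
    (h : CPRepair G r σ C u v₀ σfix vs)
    (h' : CPRepair G r σ' C' u v₀ σfix vs')
    (hu' : σ u = σ' u) :
    σ = σ' ∧ C = C' :=
  cp_repair_injective_general G r σ σ' C C' u v₀ σfix vs vs' h h' hu'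
end

section
/- In the sink-popping repair construction, the resulting orientation σ_fix is sink-free: if σ is an orientation of a connected non-tree graph G with unique sink v, v' is a neighbour of v, and σ_fix is obtained from σ by flipping the chosen path v_ℓ = u, …, v₀ = v' in the unicyclic subgraph (V, R) and then flipping the edge (v, v'), then no vertex is a sink under σ_fix. -/
/-!
Only edges on the path `v' = v₀, …, v_ℓ = u` and the edge `vv'` change orientation. Since `v₁`
points to `v'` unless `v₁ = v`, and no interior path vertex has two outgoing `R`-arcs, every path
edge beyond the first points back toward `v'`. After the flips each `vᵢ` with `i < ℓ` therefore
points to `vᵢ₊₁` (when `v₁ = v` the two flips of `vv'` cancel and `v'` keeps its arc to `v`), `u`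
loses at most one of its two outgoing `R`-arcs, `v` points to `v'` or to its successor on the path,
and every other vertex keeps all its outgoing arcs.
-/

namespace List

variable {α : Type*}

theorem mem_zipWith_tail_iff {β : Type*} {f : α → α → β} {l : List α} {b : β} :
    b ∈ zipWith f l l.tail ↔ ∃ i, ∃ h : i + 1 < l.length, f l[i] l[i + 1] = b := by
  rw [mem_iff_getElem]
  constructor
  · rintro ⟨i, hi, rfl⟩
    simp only [length_zipWith, length_tail, lt_min_iff] at hi
    exact ⟨i, by omega, by simp⟩
  · rintro ⟨i, hi, rfl⟩
    exact ⟨i, by simp; omega, by simp⟩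

theorem mem_of_sym2_mem_zipWith_tail {l : List α} {a b : α}
    (h : s(a, b) ∈ zipWith (fun p q => s(p, q)) l l.tail) : a ∈ l := by
  obtain ⟨i, hi, he⟩ := mem_zipWith_tail_iff.1 h
  rcases Sym2.eq_iff.1 he with ⟨rfl, -⟩ | ⟨-, rfl⟩ <;> exact getElem_mem _

theorem Nodup.eq_getElem_of_sym2_mem_zipWith_tail {l : List α} (hl : l.Nodup) {i : ℕ}
    (hi : i < l.length) {c : α} (h : s(l[i], c) ∈ zipWith (fun p q => s(p, q)) l l.tail) :
    (∃ h : i + 1 < l.length, c = l[i + 1]) ∨ ∃ h : 0 < i, c = l[i - 1] := by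
  obtain ⟨j, hj, he⟩ := mem_zipWith_tail_iff.1 h
  rcases Sym2.eq_iff.1 he with ⟨hji, rfl⟩ | ⟨rfl, hji⟩
  · obtain rfl := hl.getElem_inj_iff.1 hji
    exact .inl ⟨hj, rfl⟩
  · obtain rfl := hl.getElem_inj_iff.1 hji
    exact .inr ⟨j.succ_pos, rfl⟩

theorem Nodup.getElem_ne_of_head?_eq {l : List α} (hl : l.Nodup) {a : α} (h : l.head? = some a)
    {i : ℕ} (hi : i < l.length) (hpos : 0 < i) : l[i] ≠ a := by
  rw [head?_eq_getElem?, getElem?_eq_some_iff] at h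
  obtain ⟨h0, rfl⟩ := h
  intro he
  have := hl.getElem_inj_iff.1 he
  omega

theorem Nodup.getElem_ne_of_getLast?_eq {l : List α} (hl : l.Nodup) {b : α}
    (h : l.getLast? = some b) {i : ℕ} (hi : i + 1 < l.length) : l[i] ≠ b := by
  rw [getLast?_eq_getElem?, getElem?_eq_some_iff] at h
  obtain ⟨hn, rfl⟩ := h
  intro he
  have := hl.getElem_inj_iff.1 he
  omega

theorem getElem_eq_of_getLast?_eq {l : List α} {b : α} (h : l.getLast? = some b) {i : ℕ}
    (hi : i < l.length) (hlast : l.length ≤ i + 1) : l[i] = b := by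
  rw [getLast?_eq_getElem?, getElem?_eq_some_iff] at h
  obtain ⟨hn, rfl⟩ := h
  congr 1
  omega

end List

namespace SimpleGraph

variable {V : Type*}

def HasTwoOutArcs (R : SimpleGraph V) (σ : V → V → Prop) (x : V) : Prop :=
  ∃ a b, a ≠ b ∧ R.Adj x a ∧ R.Adj x b ∧ σ x a ∧ σ x b

theorem HasTwoOutArcs.exists_notMem {R : SimpleGraph V} {σ : V → V → Prop} {x : V}
    (h : R.HasTwoOutArcs σ x) {S : Set V} (hS : S.Subsingleton) : ∃ c, σ x c ∧ c ∉ S := by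
  obtain ⟨a, b, hab, -, -, ha, hb⟩ := h
  by_cases haS : a ∈ S
  · exact ⟨b, hb, fun hbS => hab (hS haS hbS)⟩
  · exact ⟨a, ha, haS⟩

theorem arc_toward_head_of_not_hasTwoOutArcs {R : SimpleGraph V} {σ : V → V → Prop}
    (hor : ∀ a b, R.Adj a b → (σ a b ↔ ¬σ b a)) {v v' u : V} (hsink : ∀ x, ¬σ v x)
    {l : List V} (hchain : l.IsChain R.Adj) (hnodup : l.Nodup)
    (hhead : l.head? = some v') (hlast : l.getLast? = some u)
    (hinterior : ∀ x ∈ l, x ≠ v' → x ≠ u → ¬R.HasTwoOutArcs σ x)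
    (hfirst : ∀ v₁ ∈ l[1]?, v₁ ≠ v → σ v₁ v') :
    ∀ i (hi : i + 1 < l.length), (i = 0 → l[1] ≠ v) → σ l[i + 1] l[i] := by
  intro i
  induction i with
  | zero =>
    intro hi h1
    obtain ⟨_, h0⟩ := List.getElem?_eq_some_iff.1 (List.head?_eq_getElem? ▸ hhead)
    exact h0 ▸ hfirst _ (List.getElem?_eq_getElem hi) (h1 rfl)
  | succ i ih =>
    intro hi _
    refine (hor _ _ (hchain.getElem (i + 1) hi).symm).2 fun hout => ?_
    by_cases hv : l[i + 1] = v
    · exact hsink _ (hv ▸ hout)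
    · have hback : σ l[i + 1] l[i] := ih (by omega) fun h => by subst h; exact hv
      have hne : l[i] ≠ l[i + 2] := fun h => by simpa using hnodup.getElem_inj_iff.1 h
      exact hinterior _ (List.getElem_mem _) (hnodup.getElem_ne_of_head?_eq hhead _ i.succ_pos)
        (hnodup.getElem_ne_of_getLast?_eq hlast hi)
        ⟨_, _, hne, (hchain.getElem i (by omega)).symm, hchain.getElem (i + 1) hi, hback, hout⟩

end SimpleGraph

/-- The edges whose orientation the repair reverses: an edge `vv'` lying on the path is flipped
twice, hence not at all. -/
def repairFlips {V : Type*} (vs : List V) (v v' : V) (e : Sym2 V) : Prop :=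
  Xor (e ∈ List.zipWith (fun p q => s(p, q)) vs vs.tail) (e = s(v, v'))

section repairFlips

variable {V : Type*} {vs : List V} {v v' : V}

theorem not_repairFlips_of_notMem {w : V} (hw : w ∉ vs) (hv' : v' ∈ vs) (hwv : w ≠ v) (x : V) :
    ¬repairFlips vs v v' s(w, x) := by
  rintro (⟨h, -⟩ | ⟨h, -⟩)
  · exact hw (List.mem_of_sym2_mem_zipWith_tail h)
  · rcases Sym2.eq_iff.1 h with ⟨h1, -⟩ | ⟨rfl, -⟩
    · exact hwv h1
    · exact hw hv'

theorem repairFlips_of_notMem (hv : v ∉ vs) : repairFlips vs v v' s(v, v') :=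
  .inr ⟨rfl, fun h => hv (List.mem_of_sym2_mem_zipWith_tail h)⟩

theorem repairFlips_getElem_succ_iff (hnodup : vs.Nodup) (hhead : vs.head? = some v') {i : ℕ}
    (hi : i + 1 < vs.length) : repairFlips vs v v' s(vs[i], vs[i + 1]) ↔ ¬(i = 0 ∧ vs[1] = v) := by
  have hmem : s(vs[i], vs[i + 1]) ∈ List.zipWith (fun p q => s(p, q)) vs vs.tail :=
    List.mem_zipWith_tail_iff.2 ⟨i, hi, rfl⟩
  have heq : s(vs[i], vs[i + 1]) = s(v, v') ↔ i = 0 ∧ vs[1] = v := by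
    constructor
    · intro h
      rcases Sym2.eq_iff.1 h with ⟨-, h⟩ | ⟨h0, h1⟩
      · exact absurd h (hnodup.getElem_ne_of_head?_eq hhead _ i.succ_pos)
      · obtain rfl : i = 0 := by
          by_contra hi0
          exact hnodup.getElem_ne_of_head?_eq hhead _ (Nat.pos_of_ne_zero hi0) h0
        exact ⟨rfl, h1⟩
    · rintro ⟨rfl, h1⟩
      obtain ⟨_, h0⟩ := List.getElem?_eq_some_iff.1 (List.head?_eq_getElem? ▸ hhead)
      simp [h0, h1, Sym2.eq_swap]
  simp [repairFlips, Xor, hmem, heq]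

theorem repairFlips_getLast_subsingleton (hnodup : vs.Nodup) (hhead : vs.head? = some v') {u : V}
    (hlast : vs.getLast? = some u) (huv : u ≠ v) : {c | repairFlips vs v v' s(u, c)}.Subsingleton := by
  obtain ⟨hn, hu⟩ := List.getElem?_eq_some_iff.1 (List.getLast?_eq_getElem? ▸ hlast)
  have hpath : ∀ c, s(u, c) ∈ List.zipWith (fun p q => s(p, q)) vs vs.tail →
      ∃ h : 0 < vs.length - 1, c = vs[vs.length - 1 - 1] := by
    intro c hc
    rw [← hu] at hc
    rcases hnodup.eq_getElem_of_sym2_mem_zipWith_tail _ hc with ⟨h, -⟩ | h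
    · omega
    · exact h
  have hedge : ∀ c, s(u, c) = s(v, v') → u = v' ∧ c = v := by
    intro c hc
    rcases Sym2.eq_iff.1 hc with ⟨h, -⟩ | h
    · exact absurd h huv
    · exact h
  intro c hc d hd
  rcases Xor.or hc with hc | hc <;> rcases Xor.or hd with hd | hd
  · exact (hpath c hc).2.trans (hpath d hd).2.symm
  · exact absurd (hu ▸ (hedge d hd).1) (hnodup.getElem_ne_of_head?_eq hhead _ (hpath c hc).1)
  · exact absurd (hu ▸ (hedge c hc).1) (hnodup.getElem_ne_of_head?_eq hhead _ (hpath d hd).1)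
  · exact (hedge c hc).2.trans (hedge d hd).2.symm

end repairFlips

theorem sink_popping_repair_sink_free_general {V : Type*}
    (G : SimpleGraph V)
    (R : SimpleGraph V) (hRG : R ≤ G)
    (σ : V → V → Prop)
    (hor : ∀ a b, G.Adj a b → (σ a b ↔ ¬ σ b a))
    (v : V) (hsink : ∀ x, ¬ σ v x) (huniq : ∀ w, (∀ x, ¬ σ w x) → w = v)
    (v' u : V) (hadj : G.Adj v v')
    (vs : List V)
    (hhead : vs.head? = some v') (hlast : vs.getLast? = some u)
    (hnodup : vs.Nodup) (hchain : List.Chain' R.Adj vs)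
    (hu_good : ∃ a b, a ≠ b ∧ R.Adj u a ∧ R.Adj u b ∧ σ u a ∧ σ u b)
    (hinterior : ∀ x ∈ vs, x ≠ v' → x ≠ u →
      ¬ ∃ a b, a ≠ b ∧ R.Adj x a ∧ R.Adj x b ∧ σ x a ∧ σ x b)
    (hfirst : ∀ v₁ ∈ vs[1]?, v₁ ≠ v → σ v₁ v')
    (σfix : V → V → Prop)
    (hσfix : ∀ a b, σfix a b ↔
      ((Xor' (s(a, b) ∈ List.zipWith (fun p q => s(p, q)) vs vs.tail)
          (s(a, b) = s(v, v'))) ∧ σ b a) ∨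
      (¬ (Xor' (s(a, b) ∈ List.zipWith (fun p q => s(p, q)) vs vs.tail)
          (s(a, b) = s(v, v'))) ∧ σ a b)) :
    ∀ w : V, ∃ x : V, σfix w x := by
  have hback := SimpleGraph.arc_toward_head_of_not_hasTwoOutArcs (fun a b h => hor a b (hRG h))
    hsink hchain hnodup hhead hlast hinterior hfirst
  have huv : u ≠ v := by
    rintro rfl
    obtain ⟨a, -, -, -, -, ha, -⟩ := hu_good
    exact hsink a ha
  intro w
  by_cases hw : w ∈ vs
  · obtain ⟨i, hi, rfl⟩ := List.mem_iff_getElem.1 hw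
    by_cases hsucc : i + 1 < vs.length
    · have hflip := repairFlips_getElem_succ_iff (v := v) hnodup hhead hsucc
      refine ⟨vs[i + 1], (hσfix _ _).2 ?_⟩
      by_cases hvv : i = 0 ∧ vs[1] = v
      · obtain ⟨rfl, h1⟩ := hvv
        refine .inr ⟨fun h => hflip.1 h ⟨rfl, h1⟩, ?_⟩
        exact (hor _ _ (hRG (hchain.getElem 0 hsucc))).2 (h1 ▸ hsink _)
      · exact .inl ⟨hflip.2 hvv, hback i hsucc fun h0 h1 => hvv ⟨h0, h1⟩⟩
    · obtain rfl := List.getElem_eq_of_getLast?_eq hlast hi (by omega)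
      obtain ⟨c, hc, hfixed⟩ := SimpleGraph.HasTwoOutArcs.exists_notMem (R := R) hu_good
        (repairFlips_getLast_subsingleton hnodup hhead hlast huv)
      exact ⟨c, (hσfix _ _).2 (.inr ⟨hfixed, hc⟩)⟩
  · by_cases hwv : w = v
    · subst hwv
      exact ⟨v', (hσfix _ _).2 (.inl ⟨repairFlips_of_notMem hw, (hor _ _ hadj.symm).2 (hsink _)⟩)⟩
    · obtain ⟨x, hx⟩ : ∃ x, σ w x := by
        by_contra! h
        exact hwv (huniq w h)
      exact ⟨x, (hσfix _ _).2
        (.inr ⟨not_repairFlips_of_notMem hw (List.mem_of_mem_head? hhead) hwv x, hx⟩)⟩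

/-- Sink-popping repair: let `G` be a connected graph that is not a tree, `R ≤ G` a
spanning unicyclic subgraph (`|R| = |V|`), and `σ` an orientation of `G` whose
unique sink is `v`.  Let `v'` be a neighbour of `v`, and let
`vs = [v₀ = v', v₁, …, v_ℓ = u]` be the chosen path in `(V, R)` from `v'` to the
good vertex `u` (a vertex with two outgoing `R`-arcs, the closest one to `v'`, so
that no interior vertex of the path is good, and the first path edge points toward
`v'` unless `v₁ = v`).  The repaired orientation `σfix`, obtained by flipping every
edge of the path and then flipping the edge `(v, v')`, is sink-free. -/
theorem sink_popping_repair_sink_free {V : Type*} [Fintype V] [DecidableEq V]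
    (G : SimpleGraph V) (hG : G.Connected)
    (R : SimpleGraph V) [DecidableRel R.Adj] (hRG : R ≤ G)
    (hRcard : R.edgeFinset.card = Fintype.card V) (hRconn : R.Connected)
    (σ : V → V → Prop)
    (hsub : ∀ a b, σ a b → G.Adj a b)
    (hor : ∀ a b, G.Adj a b → (σ a b ↔ ¬ σ b a))
    (v : V) (hsink : ∀ x, ¬ σ v x) (huniq : ∀ w, (∀ x, ¬ σ w x) → w = v)
    (v' u : V) (hadj : G.Adj v v')
    (vs : List V)
    (hhead : vs.head? = some v') (hlast : vs.getLast? = some u)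
    (hnodup : vs.Nodup) (hchain : List.Chain' R.Adj vs)
    (hvv' : v ≠ v')
    (hu_good : ∃ a b, a ≠ b ∧ R.Adj u a ∧ R.Adj u b ∧ σ u a ∧ σ u b)
    (hinterior : ∀ x ∈ vs, x ≠ v' → x ≠ u →
      ¬ ∃ a b, a ≠ b ∧ R.Adj x a ∧ R.Adj x b ∧ σ x a ∧ σ x b)
    (hfirst : ∀ v₁ ∈ vs[1]?, v₁ ≠ v → σ v₁ v')
    (σfix : V → V → Prop)
    (hσfix : ∀ a b, σfix a b ↔
      ((Xor' (s(a, b) ∈ List.zipWith (fun p q => s(p, q)) vs vs.tail)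
          (s(a, b) = s(v, v'))) ∧ σ b a) ∨
      (¬ (Xor' (s(a, b) ∈ List.zipWith (fun p q => s(p, q)) vs vs.tail)
          (s(a, b) = s(v, v'))) ∧ σ a b)) :
    ∀ w : V, ∃ x : V, σfix w x :=
  sink_popping_repair_sink_free_general G R hRG σ hor v hsink huniq v' u hadj vs hhead hlast hnodup
    hchain hu_good hinterior hfirst σfix hσfix
end
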